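/- arXiv:1807.03609 — 2 statements merged into one kernel-verified Lean document; each statement's English description precedes it below -/
import Mathlib

section
/- Let P ≥ 1, γ > 0, and 0 ≤ β < 1/2 (equivalently temperature T = 1/β > 2). Then the only p ∈ ℝ^P satisfying p = ⟨ξ tanh(β ξ·p)⟩_ξ + √γ ⟨η tanh((β/√γ) η·p)⟩_η (with ξ, η uniform on {−1,1}^P) is p = 0. -/
/-!
Pair the equation with `p` and write `s = ξ · p`. Then
`‖p‖² = ⟨s tanh (β s)⟩ + √γ ⟨s tanh (β s / √γ)⟩`. Since `s tanh (c s) ≤ c s²` for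
`c ≥ 0`, and `⟨s²⟩ = ‖p‖²` because the coordinates of a uniform spin vector are
orthonormal, this gives `‖p‖² ≤ 2β ‖p‖²`, which forces `p = 0` when `2β < 1`.
-/

open Finset

/-- `±1` value of a boolean. -/
def spin (b : Bool) : ℝ := if b then 1 else -1

/-- Expectation with respect to `ξ` uniform on `{-1,1}^P`. -/
noncomputable def unifExp (P : ℕ) (f : (Fin P → ℝ) → ℝ) : ℝ :=
  (∑ b : Fin P → Bool, f (fun μ => spin (b μ))) / 2 ^ P

namespace Real

theorem monotone_mul_cosh_sub_sinh : Monotone fun x => x * cosh x - sinh x := by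
  refine monotone_of_deriv_nonneg (by fun_prop) fun x => ?_
  have hderiv : HasDerivAt (fun x => x * cosh x - sinh x) (x * sinh x) x := by
    have h := ((hasDerivAt_id' x).mul (hasDerivAt_cosh x)).sub (hasDerivAt_sinh x)
    rwa [one_mul, add_sub_cancel_left] at h
  rw [hderiv.deriv]
  rcases le_total 0 x with hx | hx
  · exact mul_nonneg hx (sinh_nonneg_iff.2 hx)
  · exact mul_nonneg_of_nonpos_of_nonpos hx (sinh_nonpos_iff.2 hx)

theorem mul_tanh_le_sq (x : ℝ) : x * tanh x ≤ x ^ 2 := by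
  have hsign : 0 ≤ x * (x * cosh x - sinh x) := by
    rcases le_total 0 x with hx | hx
    · exact mul_nonneg hx (by simpa using monotone_mul_cosh_sub_sinh hx)
    · exact mul_nonneg_of_nonpos_of_nonpos hx (by simpa using monotone_mul_cosh_sub_sinh hx)
  rw [tanh_eq_sinh_div_cosh, ← mul_div_assoc, div_le_iff₀ (cosh_pos x)]
  nlinarith

theorem mul_tanh_mul_le {c : ℝ} (hc : 0 ≤ c) (s : ℝ) : s * tanh (c * s) ≤ c * s ^ 2 := by
  rcases hc.eq_or_lt with rfl | hc
  · simp
  refine le_of_mul_le_mul_left ?_ hc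
  calc c * (s * tanh (c * s)) = c * s * tanh (c * s) := by ring
    _ ≤ (c * s) ^ 2 := mul_tanh_le_sq _
    _ = c * (c * s ^ 2) := by ring

end Real

theorem spin_not (b : Bool) : spin (!b) = -spin b := by
  cases b <;> simp [spin]

theorem spin_mul_self (b : Bool) : spin b * spin b = 1 := by
  cases b <;> norm_num [spin]

theorem sum_spin_mul_spin_of_ne {P : ℕ} {ρ σ : Fin P} (h : ρ ≠ σ) :
    ∑ b : Fin P → Bool, spin (b ρ) * spin (b σ) = 0 := by
  let flip : (Fin P → Bool) → (Fin P → Bool) := fun b => Function.update b σ (!b σ)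
  have hflip : Function.Involutive flip := fun b => by
    ext i
    by_cases hi : i = σ
    · subst hi; simp [flip]
    · simp [flip, Function.update_of_ne hi]
  have hodd (b : Fin P → Bool) :
      spin (flip b ρ) * spin (flip b σ) = -(spin (b ρ) * spin (b σ)) := by
    simp only [flip, Function.update_of_ne h, Function.update_self, spin_not]
    ring
  have hsum :=
    Equiv.sum_comp (hflip.toPerm flip) fun b : Fin P → Bool => spin (b ρ) * spin (b σ)
  simp only [Function.Involutive.coe_toPerm, hodd, sum_neg_distrib] at hsum
  linarith

section unifExp

variable {P : ℕ}

theorem unifExp_mono {f g : (Fin P → ℝ) → ℝ} (h : ∀ ξ, f ξ ≤ g ξ) :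
    unifExp P f ≤ unifExp P g :=
  div_le_div_of_nonneg_right (sum_le_sum fun b _ => h _) (by positivity)

theorem unifExp_const_mul (c : ℝ) (f : (Fin P → ℝ) → ℝ) :
    unifExp P (fun ξ => c * f ξ) = c * unifExp P f := by
  simp only [unifExp, ← mul_sum, mul_div_assoc]

theorem unifExp_sum {ι : Type*} (s : Finset ι) (f : ι → (Fin P → ℝ) → ℝ) :
    unifExp P (fun ξ => ∑ i ∈ s, f i ξ) = ∑ i ∈ s, unifExp P (f i) := by
  simp only [unifExp, ← sum_div]
  rw [sum_comm]

theorem unifExp_mul_apply (ρ σ : Fin P) :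
    unifExp P (fun ξ => ξ ρ * ξ σ) = if ρ = σ then 1 else 0 := by
  split_ifs with h
  · subst h
    simp [unifExp, spin_mul_self]
  · simp [unifExp, sum_spin_mul_spin_of_ne h]

theorem unifExp_dot_sq (p : Fin P → ℝ) :
    unifExp P (fun ξ => (∑ ρ, ξ ρ * p ρ) ^ 2) = ∑ ρ, p ρ ^ 2 := by
  have hexpand (ξ : Fin P → ℝ) :
      (∑ ρ, ξ ρ * p ρ) ^ 2 = ∑ ρ, ∑ σ, p ρ * p σ * (ξ ρ * ξ σ) := by
    rw [sq, sum_mul_sum]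
    exact sum_congr rfl fun ρ _ => sum_congr rfl fun σ _ => by ring
  simp only [hexpand, unifExp_sum, unifExp_const_mul, unifExp_mul_apply]
  simp [sq]

theorem sum_mul_unifExp (p : Fin P → ℝ) (g : (Fin P → ℝ) → ℝ) :
    ∑ μ, p μ * unifExp P (fun ξ => ξ μ * g ξ) =
      unifExp P (fun ξ => (∑ μ, ξ μ * p μ) * g ξ) := by
  simp only [← unifExp_const_mul, ← unifExp_sum, sum_mul]
  congr with ξ
  exact sum_congr rfl fun μ _ => by ring

theorem unifExp_dot_mul_tanh_le (p : Fin P → ℝ) {c : ℝ} (hc : 0 ≤ c) :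
    unifExp P (fun ξ => (∑ ρ, ξ ρ * p ρ) * Real.tanh (c * ∑ ρ, ξ ρ * p ρ)) ≤
      c * ∑ ρ, p ρ ^ 2 :=
  calc _ ≤ unifExp P (fun ξ => c * (∑ ρ, ξ ρ * p ρ) ^ 2) :=
        unifExp_mono fun _ => Real.mul_tanh_mul_le hc _
    _ = c * ∑ ρ, p ρ ^ 2 := by rw [unifExp_const_mul, unifExp_dot_sq]

end unifExp

theorem stmt11_general (P : ℕ) (β γ : ℝ) (hβ0 : 0 ≤ β) (hβ : β < 1 / 2)
    (hγ : 0 < γ) (p : Fin P → ℝ)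
    (hp : ∀ μ, p μ =
      unifExp P (fun ξ => ξ μ * Real.tanh (β * ∑ ρ, ξ ρ * p ρ))
      + Real.sqrt γ *
          unifExp P (fun η => η μ * Real.tanh ((β / Real.sqrt γ) * ∑ ρ, η ρ * p ρ))) :
    p = 0 := by
  have hsqrt : Real.sqrt γ ≠ 0 := (Real.sqrt_pos.2 hγ).ne'
  set Q := ∑ μ, p μ ^ 2
  have hQ : Q ≤ 2 * β * Q :=
    calc Q = ∑ μ, p μ * unifExp P (fun ξ => ξ μ * Real.tanh (β * ∑ ρ, ξ ρ * p ρ))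
          + Real.sqrt γ * ∑ μ, p μ *
            unifExp P (fun η => η μ * Real.tanh (β / Real.sqrt γ * ∑ ρ, η ρ * p ρ)) := by
          rw [mul_sum, ← sum_add_distrib]
          exact sum_congr rfl fun μ _ => by linear_combination p μ * hp μ
      _ ≤ β * Q + Real.sqrt γ * (β / Real.sqrt γ * Q) := by
          rw [sum_mul_unifExp, sum_mul_unifExp]
          gcongr
          · exact unifExp_dot_mul_tanh_le p hβ0
          · exact unifExp_dot_mul_tanh_le p (by positivity)
      _ = 2 * β * Q := by field_simp; ring
  have hQ0 : Q = 0 := by nlinarith [sum_nonneg fun μ (_ : μ ∈ univ) => sq_nonneg (p μ)]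
  ext μ
  exact pow_eq_zero_iff two_ne_zero |>.1 <|
    congrFun ((Fintype.sum_eq_zero_iff_of_nonneg fun μ => sq_nonneg (p μ)).1 hQ0) μ

/-- Above the critical temperature `T_c = 2` (i.e. for `0 ≤ β < 1/2`), the only
solution of the three-layer RBM self-consistent equation is `p = 0`. -/
theorem stmt11 (P : ℕ) (hP : 1 ≤ P) (β γ : ℝ) (hβ0 : 0 ≤ β) (hβ : β < 1 / 2)
    (hγ : 0 < γ) (p : Fin P → ℝ)
    (hp : ∀ μ, p μ =
      unifExp P (fun ξ => ξ μ * Real.tanh (β * ∑ ρ, ξ ρ * p ρ))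
      + Real.sqrt γ *
          unifExp P (fun η => η μ * Real.tanh ((β / Real.sqrt γ) * ∑ ρ, η ρ * p ρ))) :
    p = 0 :=
  stmt11_general P β γ hβ0 hβ hγ p hp
end

section
/- With the notation of the interpolating pressure Φ_N(t,x) (with P̂ᵀP̂ = J^c), Φ_N satisfies at every (t,x) the Hamilton–Jacobi equation ∂_t Φ_N(t,x) + (1/2) Σ_{μ=1}^P Σ_{a=1}^ν ( ∂Φ_N/∂x_a^μ (t,x) )² + V_N(t,x) = 0, where V_N(t,x) = (1/2) Σ_{μ=1}^P Σ_{a=1}^ν [ ⟨((P̂ m^μ)_a)²⟩_{(t,x)} − ⟨(P̂ m^μ)_a⟩_{(t,x)}² ] is the sum of the fluctuations of the rotated magnetizations. -/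
open Finset Matrix

/-- The multi-species Hopfield interaction matrix `J`. -/
def hopfieldJ (ν : ℕ) (α k : Fin ν → ℝ) : Matrix (Fin ν) (Fin ν) ℝ :=
  Matrix.of fun a b => if a = b then k a * α a ^ 2 else α a * α b

/-!
Both derivatives of `Φ_N` are Gibbs averages: the exponent is affine in `t`, with slope
`-(N/2) Σ_μ |P̂ m^μ|²` because `P̂ᵀP̂ = J^c`, and affine in `x_a^μ`, with slope `N (P̂ m^μ)_a`.
Hence `∂_t Φ_N = -(1/2) Σ ⟨((P̂ m^μ)_a)²⟩` and `∂Φ_N/∂x_a^μ = ⟨(P̂ m^μ)_a⟩`, and the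
Hamilton–Jacobi equation is the identity `⟨y²⟩ = ⟨y⟩² + (⟨y²⟩ - ⟨y⟩²)`.
-/

section GibbsAverage

variable {S : Type*} [Fintype S]

noncomputable def gibbsAvg (w O : S → ℝ) : ℝ :=
  (∑ σ, O σ * w σ) / ∑ σ, w σ

theorem gibbsAvg_const_mul (w O : S → ℝ) (r : ℝ) :
    gibbsAvg w (fun σ => r * O σ) = r * gibbsAvg w O := by
  simp only [gibbsAvg, mul_assoc, ← Finset.mul_sum, mul_div_assoc]

theorem gibbsAvg_sum {ι : Type*} (s : Finset ι) (w : S → ℝ) (O : ι → S → ℝ) :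
    gibbsAvg w (fun σ => ∑ i ∈ s, O i σ) = ∑ i ∈ s, gibbsAvg w (O i) := by
  simp only [gibbsAvg, Finset.sum_mul, ← Finset.sum_div]
  rw [Finset.sum_comm]

theorem hasDerivAt_log_sum [Nonempty S] {w : ℝ → S → ℝ} {h : S → ℝ} {t : ℝ}
    (hw : ∀ σ, HasDerivAt (fun s => w s σ) (h σ * w t σ) t) (hpos : ∀ σ, 0 < w t σ) :
    HasDerivAt (fun s => Real.log (∑ σ, w s σ)) (gibbsAvg (w t) h) t :=
  (HasDerivAt.fun_sum fun σ _ => hw σ).log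
    (Finset.sum_pos (fun σ _ => hpos σ) Finset.univ_nonempty).ne'

end GibbsAverage

theorem pressure_hamiltonJacobi {S ι κ : Type*} [Fintype S] [Nonempty S] [Fintype ι] [Fintype κ]
    [DecidableEq ι] [DecidableEq κ] {N : ℝ} (hN : N ≠ 0) (w : ℝ → (ι → κ → ℝ) → S → ℝ)
    (y : S → κ → ι → ℝ) (t : ℝ) (x : ι → κ → ℝ) (hpos : ∀ σ, 0 < w t x σ)
    (ht : ∀ σ, HasDerivAt (fun s => w s x σ) (-(N / 2) * (∑ μ, ∑ a, y σ μ a ^ 2) * w t x σ) t)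
    (hx : ∀ a μ σ, HasDerivAt (fun s => w t (Function.update x a (Function.update (x a) μ s)) σ)
      (N * y σ μ a * w t x σ) (x a μ)) :
    deriv (fun s => 1 / N * Real.log (∑ σ, w s x σ)) t
      + 1 / 2 * ∑ μ, ∑ a, (deriv (fun s => 1 / N *
          Real.log (∑ σ, w t (Function.update x a (Function.update (x a) μ s)) σ)) (x a μ)) ^ 2
      + 1 / 2 * ∑ μ, ∑ a,
          (gibbsAvg (w t x) (fun σ => y σ μ a ^ 2) - gibbsAvg (w t x) (fun σ => y σ μ a) ^ 2)
      = 0 := by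
  have hdt : deriv (fun s => 1 / N * Real.log (∑ σ, w s x σ)) t
      = -(1 / 2) * ∑ μ, ∑ a, gibbsAvg (w t x) (fun σ => y σ μ a ^ 2) := by
    rw [((hasDerivAt_log_sum ht hpos).const_mul (1 / N)).deriv, gibbsAvg_const_mul]
    simp only [gibbsAvg_sum]
    field_simp
  have hdx : ∀ a μ, deriv (fun s => 1 / N *
      Real.log (∑ σ, w t (Function.update x a (Function.update (x a) μ s)) σ)) (x a μ)
      = gibbsAvg (w t x) (fun σ => y σ μ a) := by
    intro a μ
    have hlog := hasDerivAt_log_sum (w := fun s σ => w t (Function.update x a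
      (Function.update (x a) μ s)) σ) (h := fun σ => N * y σ μ a) (t := x a μ)
      (by simpa using hx a μ) (by simpa using hpos)
    simp only [Function.update_eq_self] at hlog
    rw [(hlog.const_mul (1 / N)).deriv, gibbsAvg_const_mul]
    field_simp
  rw [hdt]
  simp only [hdx, Finset.sum_sub_distrib]
  ring

theorem sum_sum_update_update_mul {ι κ : Type*} [Fintype ι] [Fintype κ] [DecidableEq ι]
    [DecidableEq κ] (x : ι → κ → ℝ) (a : ι) (μ : κ) (s : ℝ) (Y : κ → ι → ℝ) :
    ∑ μ', ∑ a', Function.update x a (Function.update (x a) μ s) a' μ' * Y μ' a'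
      = ∑ μ', ∑ a', x a' μ' * Y μ' a' + (s - x a μ) * Y μ a := by
  have hupd : Function.update x a (Function.update (x a) μ s)
      = x + Pi.single a (Pi.single μ (s - x a μ)) := by
    ext a' μ'
    rcases eq_or_ne a' a with rfl | ha
    · rcases eq_or_ne μ' μ with rfl | hμ <;> simp [*]
    · simp [ha]
  simp [hupd, add_mul, Finset.sum_add_distrib, Pi.single_apply, ite_apply, ite_mul]

theorem hasDerivAt_sum_sum_update_mul {ι κ : Type*} [Fintype ι] [Fintype κ] [DecidableEq ι]
    [DecidableEq κ] (x : ι → κ → ℝ) (a : ι) (μ : κ) (Y : κ → ι → ℝ) :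
    HasDerivAt
      (fun s => ∑ μ', ∑ a', Function.update x a (Function.update (x a) μ s) a' μ' * Y μ' a')
      (Y μ a) (x a μ) := by
  simp only [sum_sum_update_update_mul]
  simpa using (((hasDerivAt_id (x a μ)).sub_const (x a μ)).mul_const (Y μ a)).const_add
    (∑ μ', ∑ a', x a' μ' * Y μ' a')

theorem hasDerivAt_exp_interpolation (N β c Q₁ Q₂ L t : ℝ) :
    HasDerivAt (fun s => Real.exp (N * s / 2 * Q₁ + N * (β - s) * c / 2 * Q₂ + L))
      (-(N / 2) * (c * Q₂ - Q₁) * Real.exp (N * t / 2 * Q₁ + N * (β - t) * c / 2 * Q₂ + L)) t := by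
  have hlin : HasDerivAt (fun s => N * s / 2 * Q₁ + N * (β - s) * c / 2 * Q₂ + L)
      (-(N / 2) * (c * Q₂ - Q₁)) t := by
    have hcoeff : (fun s => N * s / 2 * Q₁ + N * (β - s) * c / 2 * Q₂ + L)
        = fun s => (N * β * c / 2 * Q₂ + L) + s * (-(N / 2) * (c * Q₂ - Q₁)) := by
      funext s
      ring
    rw [hcoeff]
    simpa using ((hasDerivAt_id t).mul_const (-(N / 2) * (c * Q₂ - Q₁))).const_add
      (N * β * c / 2 * Q₂ + L)
  simpa only [mul_comm] using hlin.exp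

theorem sum_mulVec_sq {n : Type*} [Fintype n] (M : Matrix n n ℝ) (v : n → ℝ) :
    ∑ a, (M *ᵥ v) a ^ 2 = v ⬝ᵥ (Mᵀ * M) *ᵥ v := by
  rw [← mulVec_mulVec, dotProduct_mulVec, vecMul_transpose]
  simp only [dotProduct, sq]

theorem dotProduct_hopfieldJ_mulVec {ν : ℕ} (α k v : Fin ν → ℝ) :
    v ⬝ᵥ hopfieldJ ν α k *ᵥ v = ∑ a, k a * α a ^ 2 * v a ^ 2
      + ∑ a, ∑ b ∈ Finset.univ.filter (fun b => b ≠ a), α a * α b * v a * v b := by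
  simp only [dotProduct, mulVec, hopfieldJ, of_apply, Finset.mul_sum, ← Finset.sum_add_distrib]
  refine Finset.sum_congr rfl fun a _ => ?_
  rw [Finset.filter_ne', ← Finset.add_sum_erase _ _ (Finset.mem_univ a), if_pos rfl]
  congr 1
  · ring
  · refine Finset.sum_congr rfl fun b hb => ?_
    rw [if_neg (Finset.ne_of_mem_erase hb).symm]
    ring

theorem sum_mulVec_sq_of_transpose_mul_self {ν : ℕ} (α k : Fin ν → ℝ) (c : ℝ)
    (M : Matrix (Fin ν) (Fin ν) ℝ)
    (hM : Mᵀ * M = c • Matrix.diagonal (fun a => k a * α a ^ 2) - hopfieldJ ν α k)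
    (v : Fin ν → ℝ) :
    ∑ a, (M *ᵥ v) a ^ 2 = c * ∑ a, k a * α a ^ 2 * v a ^ 2
      - (∑ a, k a * α a ^ 2 * v a ^ 2
        + ∑ a, ∑ b ∈ Finset.univ.filter (fun b => b ≠ a), α a * α b * v a * v b) := by
  rw [sum_mulVec_sq, hM, sub_mulVec, dotProduct_sub, dotProduct_hopfieldJ_mulVec, smul_mulVec,
    dotProduct_smul, smul_eq_mul]
  congr 2
  simp only [dotProduct, mulVec_diagonal]
  exact Finset.sum_congr rfl fun a _ => by ring

theorem stmt16_general (ν P : ℕ) (hν : 1 ≤ ν)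
    (Nsz : Fin ν → ℕ) (hNsz : ∀ a, 1 ≤ Nsz a)
    (N : ℕ) (hN : N = ∑ a, Nsz a)
    (α : Fin ν → ℝ)
    (k : Fin ν → ℝ) (β c : ℝ)
    (Phat : Matrix (Fin ν) (Fin ν) ℝ)
    -- group Mattis magnetizations
    (m : ((a : Fin ν) → Fin (Nsz a) → Bool) → Fin ν → Fin P → ℝ)
    -- interpolating Boltzmann factor
    (B : ℝ → (Fin ν → Fin P → ℝ) → ((a : Fin ν) → Fin (Nsz a) → Bool) → ℝ)
    (hB : ∀ t x σ, B t x σ = Real.exp (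
      (N : ℝ) * t / 2 * ∑ μ, (∑ a, k a * α a ^ 2 * m σ a μ ^ 2
        + ∑ a, ∑ b ∈ Finset.univ.filter (fun b => b ≠ a),
            α a * α b * m σ a μ * m σ b μ)
      + (N : ℝ) * (β - t) * c / 2 * ∑ μ, ∑ a, k a * α a ^ 2 * m σ a μ ^ 2
      + (N : ℝ) * ∑ μ, ∑ a, x a μ * Phat.mulVec (fun b => m σ b μ) a))
    -- interpolating pressure
    (Φ : ℝ → (Fin ν → Fin P → ℝ) → ℝ)
    (hΦ : ∀ t x, Φ t x =
      (1 / (N : ℝ)) * Real.log (∑ σ : (a : Fin ν) → Fin (Nsz a) → Bool, B t x σ))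
    -- Boltzmann–Gibbs expectation associated to `B t x`
    (avg : ℝ → (Fin ν → Fin P → ℝ) → (((a : Fin ν) → Fin (Nsz a) → Bool) → ℝ) → ℝ)
    (havg : ∀ t x O, avg t x O =
      (∑ σ : (a : Fin ν) → Fin (Nsz a) → Bool, O σ * B t x σ) /
        (∑ σ : (a : Fin ν) → Fin (Nsz a) → Bool, B t x σ))
    (hPP : Phatᵀ * Phat = c • Matrix.diagonal (fun a => k a * α a ^ 2) - hopfieldJ ν α k) :
    ∀ (t : ℝ) (x : Fin ν → Fin P → ℝ),
      deriv (fun s : ℝ => Φ s x) t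
      + (1 / 2) * ∑ μ, ∑ a,
          (deriv (fun s : ℝ =>
            Φ t (Function.update x a (Function.update (x a) μ s))) (x a μ)) ^ 2
      + (1 / 2) * ∑ μ, ∑ a,
          (avg t x (fun σ => Phat.mulVec (fun b => m σ b μ) a ^ 2)
            - avg t x (fun σ => Phat.mulVec (fun b => m σ b μ) a) ^ 2)
      = 0 := by
  intro t x
  have hN0 : (N : ℝ) ≠ 0 := by
    have h1 : 1 ≤ N := hN ▸ (hNsz ⟨0, hν⟩).trans (Finset.single_le_sum (fun a _ => Nat.zero_le _)
      (Finset.mem_univ _))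
    positivity
  simp only [hΦ, havg]
  refine pressure_hamiltonJacobi hN0 B (fun σ μ a => (Phat *ᵥ fun b => m σ b μ) a) t x
    (fun σ => (hB t x σ).symm ▸ Real.exp_pos _) (fun σ => ?_) (fun a μ σ => ?_)
  · simp only [sum_mulVec_sq_of_transpose_mul_self α k c Phat hPP, Finset.sum_sub_distrib,
      ← Finset.mul_sum, hB]
    exact hasDerivAt_exp_interpolation _ _ _ _ _ _ t
  · simp only [hB]
    convert (((hasDerivAt_sum_sum_update_mul x a μ
      (fun μ' a' => (Phat *ᵥ fun b => m σ b μ') a')).const_mul (N : ℝ)).const_add _).exp using 1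
    simp only [Function.update_eq_self]
    ring

/-- The interpolating pressure `Φ_N` satisfies a Hamilton–Jacobi equation whose
potential is the sum of the fluctuations of the rotated magnetizations. -/
theorem stmt16 (ν P : ℕ) (hν : 1 ≤ ν) (hP : 1 ≤ P)
    (Nsz : Fin ν → ℕ) (hNsz : ∀ a, 1 ≤ Nsz a)
    (N : ℕ) (hN : N = ∑ a, Nsz a)
    (α : Fin ν → ℝ) (hα : ∀ a, α a = (Nsz a : ℝ) / (N : ℝ))
    (ξ : Fin P → (a : Fin ν) → Fin (Nsz a) → ℝ)
    (hξ : ∀ μ a i, ξ μ a i = 1 ∨ ξ μ a i = -1)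
    (k : Fin ν → ℝ) (β c : ℝ)
    (Phat : Matrix (Fin ν) (Fin ν) ℝ)
    -- group Mattis magnetizations
    (m : ((a : Fin ν) → Fin (Nsz a) → Bool) → Fin ν → Fin P → ℝ)
    (hm : ∀ σ a μ, m σ a μ =
      (1 / (Nsz a : ℝ)) * ∑ i, ξ μ a i * (if σ a i then (1 : ℝ) else -1))
    -- interpolating Boltzmann factor
    (B : ℝ → (Fin ν → Fin P → ℝ) → ((a : Fin ν) → Fin (Nsz a) → Bool) → ℝ)
    (hB : ∀ t x σ, B t x σ = Real.exp (
      (N : ℝ) * t / 2 * ∑ μ, (∑ a, k a * α a ^ 2 * m σ a μ ^ 2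
        + ∑ a, ∑ b ∈ Finset.univ.filter (fun b => b ≠ a),
            α a * α b * m σ a μ * m σ b μ)
      + (N : ℝ) * (β - t) * c / 2 * ∑ μ, ∑ a, k a * α a ^ 2 * m σ a μ ^ 2
      + (N : ℝ) * ∑ μ, ∑ a, x a μ * Phat.mulVec (fun b => m σ b μ) a))
    -- interpolating pressure
    (Φ : ℝ → (Fin ν → Fin P → ℝ) → ℝ)
    (hΦ : ∀ t x, Φ t x =
      (1 / (N : ℝ)) * Real.log (∑ σ : (a : Fin ν) → Fin (Nsz a) → Bool, B t x σ))
    -- Boltzmann–Gibbs expectation associated to `B t x`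
    (avg : ℝ → (Fin ν → Fin P → ℝ) → (((a : Fin ν) → Fin (Nsz a) → Bool) → ℝ) → ℝ)
    (havg : ∀ t x O, avg t x O =
      (∑ σ : (a : Fin ν) → Fin (Nsz a) → Bool, O σ * B t x σ) /
        (∑ σ : (a : Fin ν) → Fin (Nsz a) → Bool, B t x σ))
    (hPP : Phatᵀ * Phat = c • Matrix.diagonal (fun a => k a * α a ^ 2) - hopfieldJ ν α k) :
    ∀ (t : ℝ) (x : Fin ν → Fin P → ℝ),
      deriv (fun s : ℝ => Φ s x) t
      + (1 / 2) * ∑ μ, ∑ a,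
          (deriv (fun s : ℝ =>
            Φ t (Function.update x a (Function.update (x a) μ s))) (x a μ)) ^ 2
      + (1 / 2) * ∑ μ, ∑ a,
          (avg t x (fun σ => Phat.mulVec (fun b => m σ b μ) a ^ 2)
            - avg t x (fun σ => Phat.mulVec (fun b => m σ b μ) a) ^ 2)
      = 0 :=
  stmt16_general ν P hν Nsz hNsz N hN α k β c Phat m B hB Φ hΦ avg havg hPP
end
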